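/- For every integer d ≥ 1, the polynomial function s_d is strictly increasing on the real interval [(d+3)/2, (d+5)/2]; that is, for all real x, y with (d+3)/2 ≤ x < y ≤ (d+5)/2, s_d(x) < s_d(y). -/

import Mathlib

noncomputable def binP (n : ℕ) (y : ℝ) : ℝ :=
  (1 / (n.factorial : ℝ)) * ∏ i ∈ Finset.range n, (y - (i : ℝ))

lemma binP_zero (y : ℝ) : binP 0 y = 1 := by simp [binP]

lemma binP_succ_left (n : ℕ) (y : ℝ) :
    binP (n+1) y = y / ((n:ℝ)+1) * binP n (y - 1) := by
  unfold binP
  rw [Finset.prod_range_succ']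
  have h : ∀ i : ℕ, y - ((i:ℝ)+1) = (y - 1) - i := by intro i; ring
  simp only [Nat.cast_add, Nat.cast_one, h]
  have h1 : (n.factorial : ℝ) ≠ 0 := by positivity
  have h2 : ((n:ℝ)+1) ≠ 0 := by positivity
  rw [Nat.factorial_succ]
  push_cast
  field_simp
  ring

lemma binP_succ_right (n : ℕ) (y : ℝ) :
    binP (n+1) y = binP n y * (y - (n:ℝ)) / ((n:ℝ)+1) := by
  unfold binP
  rw [Finset.prod_range_succ, Nat.factorial_succ]
  have h1 : (n.factorial : ℝ) ≠ 0 := by positivity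
  have h2 : ((n:ℝ)+1) ≠ 0 := by positivity
  push_cast
  rw [eq_div_iff h2]
  field_simp

lemma binP_pascal (n : ℕ) (y : ℝ) :
    binP (n+1) (y+1) = binP (n+1) y + binP n y := by
  have h1 := binP_succ_left n (y+1)
  have h2 := binP_succ_right n y
  have h3 : (y+1) - 1 = y := by ring
  rw [h3] at h1
  have h4 : ((n:ℝ)+1) ≠ 0 := by positivity
  rw [h1, h2]
  field_simp
  ring

lemma binP_hockey (m : ℕ) (y : ℝ) :
    ∑ l ∈ Finset.range (m+1), binP l (y + l) = binP m (y + m + 1) := by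
  induction m with
  | zero => simp [binP_zero]
  | succ m ih =>
      rw [Finset.sum_range_succ, ih]
      have e2 : y + ((m+1:ℕ):ℝ) = (y + ↑m + 1) := by push_cast; ring
      have e3 : y + ((m+1:ℕ):ℝ) + 1 = (y + ↑m + 1) + 1 := by push_cast; ring
      rw [e2, binP_pascal m (y + ↑m + 1)]
      ring

lemma binP_self (n : ℕ) : binP n (n : ℝ) = 1 := by
  induction n with
  | zero => simp [binP_zero]
  | succ n ih =>
      rw [binP_succ_left]
      push_cast
      have h : (n:ℝ) + 1 - 1 = n := by ring
      rw [h, ih]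
      have : (n:ℝ)+1 ≠ 0 := by positivity
      field_simp

lemma binP_sum_hockey (n : ℕ) (x : ℝ) :
    ∑ m ∈ Finset.Icc 1 n, binP (n-m+1) (x - 1 - m) = binP n (x-1) - 1 := by
  have key : ∑ m ∈ Finset.Icc 1 n, binP (n-m+1) (x - 1 - m)
      = ∑ i ∈ Finset.range n, binP (i+1) ((x - 2 - n) + (i+1)) := by
    apply Finset.sum_nbij' (fun m => n - m) (fun i => n - i)
    · intro a ha
      simp only [Finset.mem_Icc] at ha
      simp only [Finset.mem_range]
      omega
    · intro a ha
      simp only [Finset.mem_range] at ha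
      simp only [Finset.mem_Icc]
      omega
    · intro a ha
      simp only [Finset.mem_Icc] at ha
      omega
    · intro a ha
      simp only [Finset.mem_range] at ha
      omega
    · intro m hm
      simp only [Finset.mem_Icc] at hm
      have hc : ((n - m : ℕ) : ℝ) = (n : ℝ) - (m:ℝ) := Nat.cast_sub hm.2
      congr 1
      rw [hc]; ring
  rw [key]
  have h4 := binP_hockey n (x - 2 - n)
  rw [Finset.sum_range_succ'] at h4
  simp only [Nat.cast_zero, add_zero, binP_zero] at h4
  have h5 : (x - 2 - n) + n + 1 = x - 1 := by ring
  rw [h5] at h4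
  push_cast at h4
  linarith [h4]

lemma binP_hockey_coeff (n : ℕ) (x : ℝ) :
    ∑ m ∈ Finset.Icc 1 n, (x - 1 - (n:ℝ))/(((n:ℝ)-m)+1) * binP (n-m) (x-1-m)
      = binP n (x-1) - 1 := by
  rw [← binP_sum_hockey n x]
  apply Finset.sum_congr rfl
  intro m hm
  simp only [Finset.mem_Icc] at hm
  have h0 : (n - m + 1) = (n-m)+1 := rfl
  rw [h0, binP_succ_right (n-m) (x-1-m), Nat.cast_sub hm.2]
  have h1 : (n:ℝ) - m + 1 ≠ 0 := by
    have : (m:ℝ) ≤ n := by exact_mod_cast hm.2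
    linarith
  field_simp
  ring

lemma binP_deriv_step (n : ℕ) (x : ℝ) :
    1/((n:ℝ)+1) * binP n (x-1)
      + x/((n:ℝ)+1) * (∑ m ∈ Finset.Icc 1 n, (1/(m:ℝ)) * binP (n-m) (x-1-m))
    = ∑ m ∈ Finset.Icc 1 (n+1), (1/(m:ℝ)) * binP (n+1-m) (x-m) := by
  have e1 : ∀ m ∈ Finset.Icc 1 n, (1/(m:ℝ)) * binP (n+1-m) (x - m)
      = x/((n:ℝ)+1) * ((1/(m:ℝ)) * binP (n-m) (x-1-m))
        + (1/((n:ℝ)+1)) * ((x - 1 - (n:ℝ))/(((n:ℝ)-m)+1) * binP (n-m) (x-1-m)) := by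
    intro m hm
    simp only [Finset.mem_Icc] at hm
    have h0 : n+1-m = (n-m)+1 := by omega
    rw [h0, binP_succ_left (n-m) (x-m), Nat.cast_sub hm.2]
    have harg : x - ↑m - 1 = x - 1 - (m:ℝ) := by ring
    rw [harg]
    have hm0 : (m:ℝ) ≠ 0 := by
      have : (0:ℝ) < m := by exact_mod_cast hm.1
      linarith
    have h1 : (n:ℝ) - m + 1 ≠ 0 := by
      have : (m:ℝ) ≤ n := by exact_mod_cast hm.2
      linarith
    have h2 : (n:ℝ) + 1 ≠ 0 := by positivity
    field_simp
    ring
  rw [Finset.sum_Icc_succ_top (by omega : 1 ≤ n+1), Finset.sum_congr rfl e1,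
    Finset.sum_add_distrib, ← Finset.mul_sum, ← Finset.mul_sum, binP_hockey_coeff]
  simp only [Nat.sub_self, binP_zero]
  have h2 : (n:ℝ) + 1 ≠ 0 := by positivity
  push_cast
  field_simp
  ring

lemma binP_hasDerivAt : ∀ (n : ℕ) (x : ℝ),
    HasDerivAt (binP n) (∑ m ∈ Finset.Icc 1 n, (1/(m:ℝ)) * binP (n-m) (x - m)) x := by
  intro n
  induction n with
  | zero =>
      intro x
      have h : binP 0 = fun _ : ℝ => (1:ℝ) := funext binP_zero
      rw [h]
      simp only [Finset.Icc_eq_empty_of_lt (by norm_num : (0:ℕ) < 1)]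
      simpa using hasDerivAt_const x (1:ℝ)
  | succ n ih =>
      intro x
      have hfun : binP (n+1) = fun y => y/((n:ℝ)+1) * binP n (y-1) :=
        funext (binP_succ_left n)
      rw [hfun]
      have h1 : HasDerivAt (fun y : ℝ => y/((n:ℝ)+1)) (1/((n:ℝ)+1)) x := by
        simpa using (hasDerivAt_id x).div_const ((n:ℝ)+1)
      have h2 : HasDerivAt (fun y : ℝ => binP n (y-1))
          (∑ m ∈ Finset.Icc 1 n, (1/(m:ℝ)) * binP (n-m) (x - 1 - m)) x := by
        have h3 := (ih (x-1)).comp x ((hasDerivAt_id x).sub_const 1)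
        simpa [Function.comp_def] using h3
      have h3 := h1.mul h2
      have h4 : (x:ℝ)/((n:ℝ)+1) = (fun y : ℝ => y/((n:ℝ)+1)) x := rfl
      rw [← binP_deriv_step n x]
      exact h3
/-- The real polynomial `c_d`: for `d = 2j`,
`c_{2j}(x) = (1/(2j)!) ∏_{i=1}^{j} (x² − ((2i−1)/2)²)`, and for `d = 2j+1`,
`c_{2j+1}(x) = (1/(2j+1)!) x ∏_{i=1}^{j} (x² − i²)`. -/
noncomputable def c (d : ℕ) (x : ℝ) : ℝ :=
  if d % 2 = 0 then
    (1 / (d.factorial : ℝ)) * ∏ i ∈ Finset.Icc 1 (d / 2), (x ^ 2 - ((2 * (i : ℝ) - 1) / 2) ^ 2)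
  else
    (1 / (d.factorial : ℝ)) * x * ∏ i ∈ Finset.Icc 1 (d / 2), (x ^ 2 - (i : ℝ) ^ 2)

/-- The real polynomial `s_d`: `s_{2k}(x) = Σ_{j=0}^{k} (−1)^{k−j} c_{2j}(x)` and
`s_{2k+1}(x) = Σ_{j=0}^{k} (−1)^{k−j} c_{2j+1}(x)`. -/
noncomputable def s (d : ℕ) (x : ℝ) : ℝ :=
  ∑ j ∈ Finset.range (d / 2 + 1), (-1 : ℝ) ^ (d / 2 - j) * c (2 * j + d % 2) x

lemma c_even (j : ℕ) (x : ℝ) : c (2*j) x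
    = (1 / ((2*j).factorial : ℝ)) * ∏ i ∈ Finset.Icc 1 j, (x ^ 2 - ((2 * (i : ℝ) - 1) / 2) ^ 2) := by
  have h1 : (2*j) % 2 = 0 := by omega
  have h2 : (2*j) / 2 = j := by omega
  simp [c, h1, h2]

lemma c_odd (j : ℕ) (x : ℝ) : c (2*j+1) x
    = (1 / ((2*j+1).factorial : ℝ)) * x * ∏ i ∈ Finset.Icc 1 j, (x ^ 2 - (i : ℝ) ^ 2) := by
  have h1 : (2*j+1) % 2 = 1 := by omega
  have h2 : (2*j+1) / 2 = j := by omega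
  simp [c, h1, h2]

lemma c_eq_binP_even : ∀ (j : ℕ) (x : ℝ), c (2*j) x = binP (2*j) (x + (2*(j:ℝ)-1)/2) := by
  intro j
  induction j with
  | zero =>
      intro x
      show c 0 x = _
      rw [show binP (2*0) (x + (2*(0:ℕ)-1)/2) = 1 from binP_zero _]
      simp [c]
  | succ j ih =>
      intro x
      push_cast
      have hidx : 2*(j+1) = (2*j+1)+1 := by omega
      -- RHS
      have hA : x + (2*((j:ℝ)+1)-1)/2 = (x + (2*(j:ℝ)+1)/2) := by ring
      have hR : binP (2*(j+1)) (x + (2*((j:ℝ)+1)-1)/2)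
          = (x^2 - ((2*(j:ℝ)+1)/2)^2) / ((2*(j:ℝ)+1+1)*(2*(j:ℝ)+1)) * binP (2*j) (x + (2*(j:ℝ)-1)/2) := by
        rw [hA, hidx, binP_succ_left (2*j+1) (x + (2*(j:ℝ)+1)/2),
          binP_succ_right (2*j) (x + (2*(j:ℝ)+1)/2 - 1)]
        push_cast
        have h1 : (2*(j:ℝ)+1+1) ≠ 0 := by positivity
        have h2 : (2*(j:ℝ)+1) ≠ 0 := by positivity
        have harg : x + (2*(j:ℝ)+1)/2 - 1 = x + (2*(j:ℝ)-1)/2 := by ring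
        rw [harg]
        field_simp
        ring
      rw [hR, ← ih x]
      -- LHS
      rw [c_even (j+1), c_even j, Finset.prod_Icc_succ_top (by omega : 1 ≤ j+1)]
      have hf : ((2*(j+1)).factorial : ℝ) = (2*(j:ℝ)+1+1)*(2*(j:ℝ)+1)*((2*j).factorial : ℝ) := by
        rw [hidx, Nat.factorial_succ, Nat.factorial_succ]
        push_cast
        ring
      rw [hf]
      have h1 : (2*(j:ℝ)+1+1) ≠ 0 := by positivity
      have h2 : (2*(j:ℝ)+1) ≠ 0 := by positivity
      have h3 : ((2*j).factorial : ℝ) ≠ 0 := by positivity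
      push_cast
      field_simp
      ring

lemma c_eq_binP_odd : ∀ (j : ℕ) (x : ℝ), c (2*j+1) x = binP (2*j+1) (x + (j:ℝ)) := by
  intro j
  induction j with
  | zero =>
      intro x
      rw [c_odd 0 x]
      have : binP 1 (x + (0:ℕ)) = x := by
        rw [binP_succ_left 0, binP_zero]
        push_cast
        ring
      rw [this]
      simp
  | succ j ih =>
      intro x
      push_cast
      have hidx : 2*(j+1)+1 = (2*j+1+1)+1 := by omega
      have hA : x + ((j:ℝ)+1) = (x + (j:ℝ)) + 1 := by ring
      have hR : binP (2*(j+1)+1) (x + ((j:ℝ)+1))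
          = (x^2 - ((j:ℝ)+1)^2) / ((2*(j:ℝ)+1+1+1)*(2*(j:ℝ)+1+1)) * binP (2*j+1) (x + (j:ℝ)) := by
        rw [hA, hidx, binP_succ_left (2*j+1+1) ((x + (j:ℝ)) + 1),
          binP_succ_right (2*j+1) ((x + (j:ℝ)) + 1 - 1)]
        push_cast
        have h1 : (2*(j:ℝ)+1+1+1) ≠ 0 := by positivity
        have h2 : (2*(j:ℝ)+1+1) ≠ 0 := by positivity
        have harg : x + (j:ℝ) + 1 - 1 = x + (j:ℝ) := by ring
        rw [harg]
        field_simp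
        ring
      rw [hR, ← ih x]
      rw [c_odd (j+1), c_odd j, Finset.prod_Icc_succ_top (by omega : 1 ≤ j+1)]
      have hf : ((2*(j+1)+1).factorial : ℝ) = (2*(j:ℝ)+1+1+1)*(2*(j:ℝ)+1+1)*((2*j+1).factorial : ℝ) := by
        rw [hidx, Nat.factorial_succ, Nat.factorial_succ]
        push_cast
        ring
      rw [hf]
      have h1 : (2*(j:ℝ)+1+1+1) ≠ 0 := by positivity
      have h2 : (2*(j:ℝ)+1+1) ≠ 0 := by positivity
      have h3 : ((2*j+1).factorial : ℝ) ≠ 0 := by positivity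
      push_cast
      field_simp

lemma c_eq_binP (n : ℕ) (x : ℝ) : c n x = binP n (x + ((n:ℝ)-1)/2) := by
  rcases Nat.even_or_odd n with ⟨j, hj⟩ | ⟨j, hj⟩
  · subst hj
    have := c_eq_binP_even j x
    rw [show j + j = 2*j from by omega] at *
    convert this using 3
    push_cast
    ring
  · subst hj
    have := c_eq_binP_odd j x
    convert this using 3
    push_cast
    ring

lemma c_hasDerivAt (n : ℕ) (x : ℝ) :
    HasDerivAt (c n) (∑ m ∈ Finset.Icc 1 n, (1/(m:ℝ)) * c (n-m) (x - m/2)) x := by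
  have hfun : c n = fun y => binP n (y + ((n:ℝ)-1)/2) := funext (c_eq_binP n)
  rw [hfun]
  have h : HasDerivAt (fun y : ℝ => binP n (y + ((n:ℝ)-1)/2))
      (∑ m ∈ Finset.Icc 1 n, (1/(m:ℝ)) * binP (n-m) ((x + ((n:ℝ)-1)/2) - m)) x := by
    have h2 := (binP_hasDerivAt n (x + ((n:ℝ)-1)/2)).comp x
      ((hasDerivAt_id x).add_const (((n:ℝ)-1)/2))
    simpa [Function.comp_def] using h2
  convert h using 1
  apply Finset.sum_congr rfl
  intro m hm
  simp only [Finset.mem_Icc] at hm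
  congr 1
  rw [c_eq_binP (n-m) (x - m/2)]
  congr 1
  rw [Nat.cast_sub hm.2]
  ring

lemma sum_c_shift (d m : ℕ) (hm : m ≤ d) (y : ℝ) :
    ∑ j ∈ (Finset.range (d/2+1)).filter (fun j => m ≤ 2*j + d%2),
      (-1:ℝ)^(d/2 - j) * c (2*j + d%2 - m) y = s (d-m) y := by
  have hfil : (Finset.range (d/2+1)).filter (fun j => m ≤ 2*j + d%2)
      = Finset.Icc ((m+1-d%2)/2) (d/2) := by
    ext j
    simp only [Finset.mem_filter, Finset.mem_range, Finset.mem_Icc]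
    omega
  rw [hfil, ← Finset.Ico_add_one_right_eq_Icc, Finset.sum_Ico_eq_sum_range]
  rw [show s (d-m) y = ∑ j ∈ Finset.range ((d-m)/2 + 1),
    (-1 : ℝ) ^ ((d-m)/2 - j) * c (2*j + (d-m)%2) y from rfl]
  have hrange : d/2 + 1 - (m+1-d%2)/2 = (d-m)/2 + 1 := by omega
  rw [hrange]
  apply Finset.sum_congr rfl
  intro i hi
  simp only [Finset.mem_range] at hi
  have e1 : d/2 - ((m+1-d%2)/2 + i) = (d-m)/2 - i := by omega
  have e2 : 2*((m+1-d%2)/2 + i) + d%2 - m = 2*i + (d-m)%2 := by omega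
  rw [e1, e2]

lemma s_hasDerivAt (d : ℕ) (x : ℝ) :
    HasDerivAt (s d) (∑ m ∈ Finset.Icc 1 d, (1/(m:ℝ)) * s (d-m) (x - m/2)) x := by
  have hfun : s d = fun y => ∑ j ∈ Finset.range (d/2+1),
      (-1:ℝ)^(d/2-j) * c (2*j + d%2) y := rfl
  rw [hfun]
  have h : HasDerivAt (fun y : ℝ => ∑ j ∈ Finset.range (d/2+1),
      (-1:ℝ)^(d/2-j) * c (2*j + d%2) y)
      (∑ j ∈ Finset.range (d/2+1), (-1:ℝ)^(d/2-j) *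
        (∑ m ∈ Finset.Icc 1 (2*j + d%2), (1/(m:ℝ)) * c (2*j + d%2 - m) (x - m/2))) x :=
    HasDerivAt.fun_sum (fun j _ => (c_hasDerivAt (2*j + d%2) x).const_mul _)
  convert h using 1
  have step1 : ∀ j ∈ Finset.range (d/2+1),
      (-1:ℝ)^(d/2-j) * (∑ m ∈ Finset.Icc 1 (2*j + d%2), (1/(m:ℝ)) * c (2*j + d%2 - m) (x - m/2))
      = ∑ m ∈ Finset.Icc 1 d, (if m ≤ 2*j + d%2 then
          (-1:ℝ)^(d/2-j) * ((1/(m:ℝ)) * c (2*j + d%2 - m) (x - m/2)) else 0) := by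
    intro j hj
    simp only [Finset.mem_range] at hj
    have hsub : Finset.Icc 1 (2*j + d%2) = (Finset.Icc 1 d).filter (fun m => m ≤ 2*j + d%2) := by
      ext m
      simp only [Finset.mem_Icc, Finset.mem_filter]
      omega
    rw [hsub, Finset.sum_filter, Finset.mul_sum]
    apply Finset.sum_congr rfl
    intro m _
    rw [mul_ite, mul_zero]
  rw [Finset.sum_congr rfl step1, Finset.sum_comm]
  apply Finset.sum_congr rfl
  intro m hm
  simp only [Finset.mem_Icc] at hm
  have step2 : ∀ j ∈ Finset.range (d/2+1),
      (if m ≤ 2*j + d%2 then (-1:ℝ)^(d/2-j) * ((1/(m:ℝ)) * c (2*j + d%2 - m) (x - m/2)) else 0)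
      = (if m ≤ 2*j + d%2 then (1/(m:ℝ)) * ((-1:ℝ)^(d/2-j) * c (2*j + d%2 - m) (x - m/2)) else 0) := by
    intro j _
    congr 1
    ring
  rw [Finset.sum_congr rfl step2, ← Finset.sum_filter, ← Finset.mul_sum,
    sum_c_shift d m hm.2]

lemma c_zero_eq (x : ℝ) : c 0 x = 1 := by simp [c]

lemma c_diff (n : ℕ) (hn : 1 ≤ n) (x : ℝ) : c n x - c n (x-1) = c (n-1) (x - 1/2) := by
  obtain ⟨n', rfl⟩ : ∃ n', n = n'+1 := ⟨n-1, by omega⟩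
  rw [c_eq_binP (n'+1) x, c_eq_binP (n'+1) (x-1), show (n'+1) - 1 = n' from rfl,
    c_eq_binP n' (x - 1/2)]
  have hz : x + ((↑(n'+1):ℝ)-1)/2 = (x - 1 + ((↑(n'+1):ℝ)-1)/2) + 1 := by ring
  rw [hz, binP_pascal n' (x - 1 + ((↑(n'+1):ℝ)-1)/2)]
  have harg : x - 1 + ((↑(n'+1):ℝ)-1)/2 = x - 1/2 + ((n':ℝ)-1)/2 := by push_cast; ring
  rw [harg]
  ring

lemma s_diff (d : ℕ) (hd : 1 ≤ d) (x : ℝ) : s d x - s d (x-1) = s (d-1) (x - 1/2) := by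
  have h1 : s d x - s d (x-1) = ∑ j ∈ Finset.range (d/2+1),
      (-1:ℝ)^(d/2-j) * (c (2*j + d%2) x - c (2*j + d%2) (x-1)) := by
    rw [show s d x = ∑ j ∈ Finset.range (d/2+1), (-1:ℝ)^(d/2-j) * c (2*j + d%2) x from rfl,
      show s d (x-1) = ∑ j ∈ Finset.range (d/2+1), (-1:ℝ)^(d/2-j) * c (2*j + d%2) (x-1) from rfl,
      ← Finset.sum_sub_distrib]
    apply Finset.sum_congr rfl
    intro j _
    ring
  rw [h1]
  have h2 : ∀ j ∈ Finset.range (d/2+1),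
      (-1:ℝ)^(d/2-j) * (c (2*j + d%2) x - c (2*j + d%2) (x-1))
      = (if 1 ≤ 2*j + d%2 then (-1:ℝ)^(d/2-j) * c (2*j + d%2 - 1) (x - 1/2) else 0) := by
    intro j _
    by_cases hc : 1 ≤ 2*j + d%2
    · rw [if_pos hc, c_diff _ hc]
    · rw [if_neg hc]
      have h0 : 2*j + d%2 = 0 := by omega
      rw [h0, c_zero_eq, c_zero_eq, sub_self, mul_zero]
  rw [Finset.sum_congr rfl h2, ← Finset.sum_filter, sum_c_shift d 1 hd]

lemma s_zero (x : ℝ) : s 0 x = 1 := by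
  rw [show s 0 x = ∑ j ∈ Finset.range 1, (-1:ℝ)^(0-j) * c (2*j+0) x from rfl]
  simp [c_zero_eq]

lemma s_rec (d : ℕ) (hd : 2 ≤ d) (x : ℝ) : s d x = c d x - s (d-2) x := by
  have hk : d/2 = (d-2)/2 + 1 := by omega
  have hp : d%2 = (d-2)%2 := by omega
  rw [show s d x = ∑ j ∈ Finset.range (d/2+1), (-1:ℝ)^(d/2-j) * c (2*j + d%2) x from rfl]
  rw [hk, Finset.sum_range_succ]
  have htop : (-1:ℝ)^((d-2)/2+1 - ((d-2)/2+1)) * c (2*((d-2)/2+1) + d%2) x = c d x := by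
    rw [Nat.sub_self, pow_zero, one_mul]
    congr 1
    omega
  rw [htop]
  have hrest : ∀ j ∈ Finset.range ((d-2)/2+1),
      (-1:ℝ)^((d-2)/2+1-j) * c (2*j + d%2) x
      = -((-1:ℝ)^((d-2)/2-j) * c (2*j + (d-2)%2) x) := by
    intro j hj
    simp only [Finset.mem_range] at hj
    have he : (d-2)/2+1-j = ((d-2)/2-j)+1 := by omega
    rw [he, pow_succ, ← hp]
    ring
  rw [Finset.sum_congr rfl hrest]
  rw [show s (d-2) x = ∑ j ∈ Finset.range ((d-2)/2+1), (-1:ℝ)^((d-2)/2-j) * c (2*j + (d-2)%2) x from rfl]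
  rw [Finset.sum_neg_distrib]
  ring

lemma c_left_one (d : ℕ) (hd : 2 ≤ d) : c d (((d:ℝ)+1)/2) = 1 := by
  rw [c_eq_binP]
  have h : ((d:ℝ)+1)/2 + ((d:ℝ)-1)/2 = ((d:ℕ):ℝ) := by ring
  rw [h, binP_self]

noncomputable def w : ℕ → ℝ := fun r =>
  if r % 6 = 0 then 1 else if r % 6 = 1 then 2 else if r % 6 = 2 then 2
  else if r % 6 = 3 then 1 else 0

lemma w_nonneg (r : ℕ) : 0 ≤ w r := by
  unfold w
  split_ifs <;> norm_num

lemma s_left_value : ∀ e : ℕ, s e (((e:ℝ)+3)/2) = w e := by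
  intro e
  induction e using Nat.strong_induction_on with
  | _ e ih =>
    match e with
    | 0 =>
        rw [s_zero]
        simp [w]
    | 1 =>
        have hs1 : s 1 = fun y : ℝ => y := by
          funext y
          rw [show s 1 y = ∑ j ∈ Finset.range 1, (-1:ℝ)^(0-j) * c (2*j+1) y from rfl]
          simp [c]
        rw [hs1]
        norm_num [w]
    | (n+2) =>
        have hcast : (((n+2:ℕ)):ℝ) = (n:ℝ)+2 := by push_cast; ring
        rw [hcast]
        have h1 := s_diff (n+2) (by omega) (((n:ℝ)+2+3)/2)
        have h2 := s_rec (n+2) (by omega) (((n:ℝ)+2+3)/2 - 1)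
        simp only [Nat.add_sub_cancel] at h1 h2
        rw [show n+2-1 = n+1 from rfl] at h1
        have h3 : c (n+2) (((n:ℝ)+2+3)/2 - 1) = 1 := by
          have hc := c_left_one (n+2) (by omega)
          convert hc using 2
          push_cast
          ring
        have h4 : s n (((n:ℝ)+2+3)/2 - 1) = w n := by
          have hv := ih n (by omega)
          convert hv using 2
          push_cast
          ring
        have h5 : s (n+1) (((n:ℝ)+2+3)/2 - 1/2) = w (n+1) := by
          have hv := ih (n+1) (by omega)
          convert hv using 2
          push_cast
          ring
        have hval : s (n+2) (((n:ℝ)+2+3)/2) = 1 + w (n+1) - w n := by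
          rw [h2, h3, h4] at h1
          rw [h5] at h1
          linarith
        rw [hval]
        have h6 : n % 6 = 0 ∨ n%6 = 1 ∨ n%6 = 2 ∨ n%6 = 3 ∨ n%6 = 4 ∨ n%6 = 5 := by omega
        unfold w
        have e1 : (n+1)%6 = (n%6+1)%6 := by omega
        have e2 : (n+2)%6 = (n%6+2)%6 := by omega
        rw [e1, e2]
        rcases h6 with h|h|h|h|h|h <;> rw [h] <;> norm_num

lemma main_claim : ∀ d : ℕ, (∀ x : ℝ, ((d:ℝ)+3)/2 ≤ x → x ≤ ((d:ℝ)+5)/2 → 0 ≤ s d x)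
    ∧ (1 ≤ d → StrictMonoOn (s d) (Set.Icc (((d:ℝ)+3)/2) (((d:ℝ)+5)/2))) := by
  intro d
  induction d using Nat.strong_induction_on with
  | _ d ih =>
    rcases Nat.eq_zero_or_pos d with rfl | hd
    · refine ⟨fun x _ _ => by rw [s_zero]; norm_num, fun h => absurd h (by norm_num)⟩
    · have hd' : (0:ℝ) < d := by exact_mod_cast hd
      have hmono : StrictMonoOn (s d) (Set.Icc (((d:ℝ)+3)/2) (((d:ℝ)+5)/2)) := by
        apply strictMonoOn_of_deriv_pos (convex_Icc _ _)
        · exact fun x _ => (s_hasDerivAt d x).differentiableAt.continuousAt.continuousWithinAt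
        · intro x hx
          rw [interior_Icc, Set.mem_Ioo] at hx
          rw [(s_hasDerivAt d x).deriv]
          have hterms : ∀ m ∈ Finset.Icc 1 d, 0 ≤ (1/(m:ℝ)) * s (d-m) (x - m/2) := by
            intro m hm
            simp only [Finset.mem_Icc] at hm
            have hm0 : (0:ℝ) < m := by exact_mod_cast hm.1
            have hmr : (m:ℝ) ≤ d := by exact_mod_cast hm.2
            apply mul_nonneg (by positivity)
            have harg1 : ((↑(d-m):ℝ)+3)/2 ≤ x - m/2 := by
              rw [Nat.cast_sub hm.2]
              have := hx.1
              linarith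
            have harg2 : x - m/2 ≤ ((↑(d-m):ℝ)+5)/2 := by
              rw [Nat.cast_sub hm.2]
              have := hx.2
              linarith
            exact (ih (d-m) (by omega)).1 _ harg1 harg2
          have hlast : (1/(d:ℝ)) * s (d-d) (x - d/2) = 1/(d:ℝ) := by
            rw [Nat.sub_self, s_zero, mul_one]
          have hge : (1/(d:ℝ)) ≤ ∑ m ∈ Finset.Icc 1 d, (1/(m:ℝ)) * s (d-m) (x - m/2) := by
            rw [← hlast]
            apply Finset.single_le_sum hterms
            simp only [Finset.mem_Icc]
            omega
          have hpos : (0:ℝ) < 1/(d:ℝ) := by positivity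
          linarith
      refine ⟨?_, fun _ => hmono⟩
      intro x hx1 hx2
      have hv : s d (((d:ℝ)+3)/2) = w d := s_left_value d
      have hw := w_nonneg d
      rcases eq_or_lt_of_le hx1 with heq | hlt
      · rw [← heq]; linarith
      · have hlow : ((d:ℝ)+3)/2 ∈ Set.Icc (((d:ℝ)+3)/2) (((d:ℝ)+5)/2) :=
          Set.mem_Icc.mpr ⟨le_refl _, by linarith⟩
        have hxm : x ∈ Set.Icc (((d:ℝ)+3)/2) (((d:ℝ)+5)/2) := Set.mem_Icc.mpr ⟨hx1, hx2⟩
        have := hmono hlow hxm hlt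
        linarith

/-- `s_d` is strictly increasing on the interval `[(d+3)/2, (d+5)/2]` for every `d ≥ 1`. -/
theorem sd_strictMono_on_small_interval (d : ℕ) (hd : 1 ≤ d) (x y : ℝ)
    (hx : ((d : ℝ) + 3) / 2 ≤ x) (hxy : x < y) (hy : y ≤ ((d : ℝ) + 5) / 2) :
    s d x < s d y := by
  have h := (main_claim d).2 hd
  exact h (Set.mem_Icc.mpr ⟨hx, by linarith⟩) (Set.mem_Icc.mpr ⟨by linarith, hy⟩) hxy
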